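/- The instantial neighbourhood modality is completely additive in each of its first n coordinates: for a valuation V on a neighbourhood frame (W,N), a fixed index i ∈ {1,…,n} and any world w, Box_n(p_1,…,p_i,…,p_n; p) holds at w under V if and only if there exists v ∈ V(p_i) such that Box_n(p_1,…,p_i,…,p_n; p) holds at w under the valuation V_{i,v} which agrees with V everywhere except V_{i,v}(p_i) = {v}. -/

import Mathlib

/-- Formulas of instantial neighbourhood logic (INL). Propositional variables
are indexed by naturals; `box n φs φ` is the (n+1)-ary modality `Box_n(φ_1,…,φ_n; φ)`. -/
inductive Formula : Type where
  | var : ℕ → Formula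
  | bot : Formula
  | top : Formula
  | neg : Formula → Formula
  | and : Formula → Formula → Formula
  | or : Formula → Formula → Formula
  | box : (n : ℕ) → (Fin n → Formula) → Formula → Formula

def Formula.imp (φ ψ : Formula) : Formula := .or (.neg φ) ψ

/-- Satisfaction on a neighbourhood frame `(W, N)` under valuation `V`. -/
def Sat {W : Type} (N : W → Set (Set W)) (V : ℕ → Set W) : Formula → W → Prop
  | .var p, w => w ∈ V p
  | .bot, _ => False
  | .top, _ => True
  | .neg φ, w => ¬ Sat N V φ w
  | .and φ ψ, w => Sat N V φ w ∧ Sat N V ψ w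
  | .or φ ψ, w => Sat N V φ w ∨ Sat N V ψ w
  | .box _ φs φ, w =>
      ∃ S ∈ N w, (∀ s ∈ S, Sat N V φ s) ∧ ∀ i, ∃ s ∈ S, Sat N V (φs i) s

open Function Set

theorem forall_inter_nonempty_iff_exists_update_singleton {ι κ α : Type*} [DecidableEq ι]
    (f : ι → Set α) (p : κ → ι) (S : Set α) (k : κ) :
    (∀ j, (S ∩ f (p j)).Nonempty) ↔
      ∃ v ∈ f (p k), ∀ j, (S ∩ update f (p k) {v} (p j)).Nonempty := by
  constructor
  · intro h
    obtain ⟨v, hvS, hvf⟩ := h k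
    refine ⟨v, hvf, fun j => ?_⟩
    by_cases hj : p j = p k
    · exact ⟨v, hvS, by simp [hj]⟩
    · simpa [update_of_ne hj] using h j
  · rintro ⟨v, hvf, h⟩ j
    by_cases hj : p j = p k
    · obtain ⟨s, hsS, hs⟩ := h j
      rw [hj, update_self, mem_singleton_iff] at hs
      exact ⟨v, hs ▸ hsS, hj ▸ hvf⟩
    · simpa [update_of_ne hj] using h j

theorem sat_box_var_iff {W : Type} (N : W → Set (Set W)) (V : ℕ → Set W) {n : ℕ}
    (ps : Fin n → ℕ) (q : ℕ) (w : W) :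
    Sat N V (.box n (fun j => .var (ps j)) (.var q)) w ↔
      ∃ S ∈ N w, S ⊆ V q ∧ ∀ j, (S ∩ V (ps j)).Nonempty := by
  rfl

/-- the instantial neighbourhood modality is completely additive in each of
its first `n` coordinates: `Box_n(p_1,…,p_n;p)` holds at `w` under `V` iff there is
`v ∈ V(p_i)` such that it holds under the valuation `V_{i,v}` agreeing with `V` except
that `V_{i,v}(p_i) = {v}`. Here `p_j := var j` for `j < n` and `p := var n`. -/
theorem stmt_1 {W : Type} (N : W → Set (Set W)) (n : ℕ) (V : ℕ → Set W)
    (i : Fin n) (w : W) :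
    Sat N V (.box n (fun j => .var j) (.var n)) w ↔
      ∃ v ∈ V i, Sat N (Function.update V (i : ℕ) {v})
        (.box n (fun j => .var j) (.var n)) w := by
  have hn : n ≠ i := i.is_lt.ne'
  simp only [sat_box_var_iff, update_of_ne hn,
    forall_inter_nonempty_iff_exists_update_singleton V Fin.val _ i]
  constructor
  · rintro ⟨S, hS, hSV, v, hv, h⟩
    exact ⟨v, hv, S, hS, hSV, h⟩
  · rintro ⟨v, hv, S, hS, hSV, h⟩
    exact ⟨S, hS, hSV, v, hv, h⟩
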